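/- Let d ∈ ℕ, c = (c_1,…,c_d) ∈ [0,∞)^d, let ũ ∈ ℝ^d have all coordinates strictly positive, let μ_1,…,μ_d be Borel measures on U_d := [0,∞)^d∖{0} with ∫_{U_d}‖z‖² μ_ℓ(dz) < ∞ for each ℓ, let v ∈ ℂ^d, and let λ ∈ ℂ, s ∈ ℝ satisfy s > 0, Re(λ) ≤ s/2 and Im(λ) ≠ 0. Define C_{v,ℓ} := 2|⟨v,e_ℓ⟩|²c_ℓ + ∫_{U_d}|⟨v,z⟩|² μ_ℓ(dz) and C̃_{v,ℓ} := 2⟨v,e_ℓ⟩²c_ℓ + ∫_{U_d}⟨v,z⟩² μ_ℓ(dz), and let Σ_v be the 2×2 real matrix given by Σ_v := (1/2)Σ_{ℓ=1}^d ũ_ℓ C_{v,ℓ} I_2 if Re(λ) = s/2 (the Im(λ)=0 correction term vanishes since Im(λ) ≠ 0), and Σ_v := (1/2)Σ_{ℓ=1}^d ũ_ℓ (C_{v,ℓ}/(s−2Re(λ)) I_2 + [[Re(C̃_{v,ℓ}/(s−2λ)), Im(C̃_{v,ℓ}/(s−2λ))],[Im(C̃_{v,ℓ}/(s−2λ)),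 −Re(C̃_{v,ℓ}/(s−2λ))]]) if Re(λ) < s/2. Then Σ_v is invertible if and only if there exists ℓ ∈ {1,…,d} such that c_ℓ⟨v,e_ℓ⟩ ≠ 0 or μ_ℓ({z ∈ U_d : ⟨v,z⟩ ≠ 0}) > 0; moreover, in that case Σ_v is strictly positive definite. -/

import Mathlib

open MeasureTheory
open scoped ENNReal

/-- The pairing `⟨v,z⟩ = ∑ j, v j * z j` of `v ∈ ℂ^d` with `z ∈ ℝ^d`. -/
noncomputable def pairCV {d : ℕ} (v : Fin d → ℂ) (z : Fin d → ℝ) : ℂ :=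
  ∑ j, v j * (z j : ℂ)

/-- `C_{v,ℓ} = 2|⟨v,e_ℓ⟩|² c_ℓ + ∫ |⟨v,z⟩|² dμ_ℓ`. -/
noncomputable def Cvl {d : ℕ} (c : Fin d → ℝ) (μ : Fin d → Measure (Fin d → ℝ))
    (v : Fin d → ℂ) (ℓ : Fin d) : ℝ :=
  2 * ‖v ℓ‖ ^ 2 * c ℓ + ∫ z, ‖pairCV v z‖ ^ 2 ∂(μ ℓ)

/-- `C̃_{v,ℓ} = 2⟨v,e_ℓ⟩² c_ℓ + ∫ ⟨v,z⟩² dμ_ℓ`. -/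
noncomputable def Ctvl {d : ℕ} (c : Fin d → ℝ) (μ : Fin d → Measure (Fin d → ℝ))
    (v : Fin d → ℂ) (ℓ : Fin d) : ℂ :=
  2 * (v ℓ) ^ 2 * (c ℓ : ℂ) + ∫ z, (pairCV v z) ^ 2 ∂(μ ℓ)

/-- The asymptotic covariance matrix `Σ_v`: for `Re λ = s/2` it is
`(1/2) ∑ ℓ ũ_ℓ (C_{v,ℓ} I₂ + [[Re C̃, Im C̃],[Im C̃, -Re C̃]] 1_{Im λ = 0})`, and for
`Re λ < s/2` (more generally, `Re λ ≠ s/2`) it is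
`(1/2) ∑ ℓ ũ_ℓ (C_{v,ℓ}/(s-2Reλ) I₂ + [[Re(C̃/(s-2λ)), Im(C̃/(s-2λ))],[Im(C̃/(s-2λ)), -Re(C̃/(s-2λ))]])`. -/
noncomputable def SigmaV {d : ℕ} (c : Fin d → ℝ) (utld : Fin d → ℝ)
    (μ : Fin d → Measure (Fin d → ℝ)) (v : Fin d → ℂ) (lam : ℂ) (s : ℝ) :
    Matrix (Fin 2) (Fin 2) ℝ :=
  if lam.re = s / 2 then
    (1 / 2 : ℝ) • ∑ ℓ, utld ℓ •
      (Cvl c μ v ℓ • (1 : Matrix (Fin 2) (Fin 2) ℝ) +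
        (if lam.im = 0 then
          !![(Ctvl c μ v ℓ).re, (Ctvl c μ v ℓ).im;
             (Ctvl c μ v ℓ).im, -(Ctvl c μ v ℓ).re]
         else 0))
  else
    (1 / 2 : ℝ) • ∑ ℓ, utld ℓ •
      ((Cvl c μ v ℓ / (s - 2 * lam.re)) • (1 : Matrix (Fin 2) (Fin 2) ℝ) +
        !![(Ctvl c μ v ℓ / ((s : ℂ) - 2 * lam)).re, (Ctvl c μ v ℓ / ((s : ℂ) - 2 * lam)).im;
           (Ctvl c μ v ℓ / ((s : ℂ) - 2 * lam)).im, -(Ctvl c μ v ℓ / ((s : ℂ) - 2 * lam)).re])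

/-!
Up to the factor `1/2`, `Σ_v = P • 1 + conjMulMatrix ζ` with `P = ∑ ũ_ℓ C_{v,ℓ} / (s - 2 Re λ)` and
`ζ = ∑ ũ_ℓ C̃_{v,ℓ} / (s - 2λ)` (on the line `Re λ = s/2`: `P = ∑ ũ_ℓ C_{v,ℓ}` and `ζ = 0`).
Since `‖C̃_{v,ℓ}‖ ≤ C_{v,ℓ}` and `Im λ ≠ 0` forces `s - 2 Re λ < ‖s - 2λ‖`, we get `‖ζ‖ < P` as soon
as some `C_{v,ℓ}` is positive, and then the quadratic form `P ‖w‖² + Re (ζ * conj w ^ 2)` is positive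
definite. Otherwise every `C_{v,ℓ}` and `C̃_{v,ℓ}` vanishes and `Σ_v = 0`. Finally `C_{v,ℓ} > 0`
exactly under the stated condition, since `∫ ‖⟨v,z⟩‖² dμ_ℓ > 0` iff `μ_ℓ` charges `{⟨v,z⟩ ≠ 0}`,
and `μ_ℓ` lives on `U_d`.
-/

lemma norm_pairCV_le {d : ℕ} (v : Fin d → ℂ) (z : Fin d → ℝ) :
    ‖pairCV v z‖ ≤ (∑ j, ‖v j‖) * ‖z‖ := by
  rw [pairCV, Finset.sum_mul]
  refine (norm_sum_le _ _).trans (Finset.sum_le_sum fun j _ => ?_)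
  rw [norm_mul, Complex.norm_real]
  exact mul_le_mul_of_nonneg_left (norm_le_pi_norm z j) (norm_nonneg _)

lemma continuous_pairCV {d : ℕ} (v : Fin d → ℂ) : Continuous (pairCV v) := by
  unfold pairCV
  fun_prop

lemma integrable_norm_pairCV_sq {d : ℕ} {ν : Measure (Fin d → ℝ)}
    (hmom : ∫⁻ z, (‖z‖₊ : ℝ≥0∞) ^ 2 ∂ν < ⊤) (v : Fin d → ℂ) :
    Integrable (fun z => ‖pairCV v z‖ ^ 2) ν := by
  have hsq : Integrable (fun z : Fin d → ℝ => ‖z‖ ^ 2) ν :=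
    ⟨(continuous_norm.pow 2).aestronglyMeasurable, by
      simpa [HasFiniteIntegral, enorm_pow, enorm_norm, enorm_eq_nnnorm] using hmom⟩
  refine (hsq.const_mul ((∑ j, ‖v j‖) ^ 2)).mono'
    ((continuous_pairCV v).norm.pow 2).aestronglyMeasurable (ae_of_all _ fun z => ?_)
  rw [norm_pow, norm_norm, ← mul_pow]
  exact pow_le_pow_left₀ (norm_nonneg _) (norm_pairCV_le v z) 2

section Coefficients

variable {d : ℕ} {c : Fin d → ℝ} {μ : Fin d → Measure (Fin d → ℝ)} {ℓ : Fin d}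

lemma Cvl_nonneg (hc : 0 ≤ c ℓ) (v : Fin d → ℂ) : 0 ≤ Cvl c μ v ℓ := by
  unfold Cvl
  have : 0 ≤ ∫ z, ‖pairCV v z‖ ^ 2 ∂(μ ℓ) := integral_nonneg fun z => sq_nonneg _
  positivity

lemma norm_Ctvl_le (hc : 0 ≤ c ℓ) (v : Fin d → ℂ) : ‖Ctvl c μ v ℓ‖ ≤ Cvl c μ v ℓ := by
  refine (norm_add_le _ _).trans (add_le_add ?_ ?_)
  · simp [Complex.norm_real, abs_of_nonneg hc]
  · refine (norm_integral_le_integral_norm _).trans_eq ?_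
    simp_rw [norm_pow]

lemma Cvl_pos_iff (hc : 0 ≤ c ℓ) (hsupp : μ ℓ {z | ¬ ((∀ i, 0 ≤ z i) ∧ z ≠ 0)} = 0)
    (hmom : ∫⁻ z, (‖z‖₊ : ℝ≥0∞) ^ 2 ∂(μ ℓ) < ⊤) (v : Fin d → ℂ) :
    0 < Cvl c μ v ℓ ↔ ((c ℓ : ℂ) * v ℓ ≠ 0 ∨
      0 < μ ℓ {z | ((∀ i, 0 ≤ z i) ∧ z ≠ 0) ∧ pairCV v z ≠ 0}) := by
  have hdiffusion_nonneg : 0 ≤ 2 * ‖v ℓ‖ ^ 2 * c ℓ := by positivity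
  have hdiffusion : 0 < 2 * ‖v ℓ‖ ^ 2 * c ℓ ↔ (c ℓ : ℂ) * v ℓ ≠ 0 := by
    rw [hdiffusion_nonneg.lt_iff_ne']
    simp [and_comm]
  have hjump_nonneg : 0 ≤ ∫ z, ‖pairCV v z‖ ^ 2 ∂(μ ℓ) :=
    integral_nonneg fun z => sq_nonneg _
  have hjump : 0 < ∫ z, ‖pairCV v z‖ ^ 2 ∂(μ ℓ) ↔
      0 < μ ℓ {z | ((∀ i, 0 ≤ z i) ∧ z ≠ 0) ∧ pairCV v z ≠ 0} := by
    rw [integral_pos_iff_support_of_nonneg (fun z => sq_nonneg _)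
      (integrable_norm_pairCV_sq hmom v), Set.ofPred_and, Set.inter_comm,
      measure_inter_conull (t := {z : Fin d → ℝ | (∀ i, 0 ≤ z i) ∧ z ≠ 0}) hsupp]
    simp only [Function.support, ne_eq, pow_eq_zero_iff two_ne_zero, norm_eq_zero]
  rw [Cvl, ← hdiffusion, ← hjump]
  constructor
  · intro h
    by_contra! h0
    linarith [h0.1, h0.2]
  · rintro (h | h) <;> linarith

end Coefficients

/-- The matrix of `w ↦ ζ * conj w` on `ℂ ≅ ℝ²`, so its quadratic form is `w ↦ Re (ζ * conj w ^ 2)`. -/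
def conjMulMatrix : ℂ →ₗ[ℝ] Matrix (Fin 2) (Fin 2) ℝ where
  toFun ζ := !![ζ.re, ζ.im; ζ.im, -ζ.re]
  map_add' ζ ξ := by ext i j; fin_cases i <;> fin_cases j <;> simp [add_comm]
  map_smul' a ζ := by ext i j; fin_cases i <;> fin_cases j <;> simp

lemma conjMulMatrix_apply (ζ : ℂ) : conjMulMatrix ζ = !![ζ.re, ζ.im; ζ.im, -ζ.re] := rfl

open Matrix in
lemma posDef_smul_one_add_conjMulMatrix {P : ℝ} {ζ : ℂ} (h : ‖ζ‖ < P) :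
    (P • 1 + conjMulMatrix ζ).PosDef := by
  rw [Matrix.posDef_iff_dotProduct_mulVec]
  refine ⟨?_, fun x hx => ?_⟩
  · ext i j
    fin_cases i <;> fin_cases j <;> simp [conjMulMatrix_apply]
  · have hn : 0 < x 0 ^ 2 + x 1 ^ 2 := by
      obtain ⟨i, hi⟩ := Function.ne_iff.1 hx
      fin_cases i <;> simp at hi <;> positivity
    set t := ζ.re * (x 0 ^ 2 - x 1 ^ 2) + 2 * ζ.im * (x 0 * x 1)
    -- Cauchy–Schwarz for `(Re ζ, Im ζ)` and `(x₀² - x₁², 2 x₀ x₁)`, a vector of norm `x₀² + x₁²`.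
    have hcs : t ^ 2 ≤ (‖ζ‖ * (x 0 ^ 2 + x 1 ^ 2)) ^ 2 := by
      rw [mul_pow, Complex.sq_norm, Complex.normSq_apply]
      nlinarith [sq_nonneg (2 * ζ.re * (x 0 * x 1) - ζ.im * (x 0 ^ 2 - x 1 ^ 2))]
    have ht : |t| < P * (x 0 ^ 2 + x 1 ^ 2) :=
      (abs_le_of_sq_le_sq hcs (by positivity)).trans_lt (by gcongr)
    have hquad : star x ⬝ᵥ (P • 1 + conjMulMatrix ζ) *ᵥ x = P * (x 0 ^ 2 + x 1 ^ 2) + t := by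
      simp only [dotProduct, Pi.star_apply, star_trivial, mulVec, conjMulMatrix_apply,
        Matrix.add_apply, Matrix.smul_apply, smul_eq_mul, of_apply, cons_val', cons_val_fin_one,
        Fin.sum_univ_two, cons_val_zero, cons_val_one, one_apply_eq, one_apply_ne, ne_eq,
        zero_ne_one, one_ne_zero, not_false_eq_true, mul_one, mul_zero, zero_add, t]
      ring
    linarith [neg_abs_le t]

lemma sum_smul_smul_one_add_conjMulMatrix {ι : Type*} (t : Finset ι) (u x : ι → ℝ)
    (ζ : ι → ℂ) :
    ∑ i ∈ t, u i • (x i • (1 : Matrix (Fin 2) (Fin 2) ℝ) + conjMulMatrix (ζ i)) =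
      (∑ i ∈ t, u i * x i) • 1 + conjMulMatrix (∑ i ∈ t, u i • ζ i) := by
  simp only [smul_add, smul_smul, Finset.sum_add_distrib, ← Finset.sum_smul, map_sum, map_smul]

section CovarianceMatrix

variable {d : ℕ} (c utld : Fin d → ℝ) (μ : Fin d → Measure (Fin d → ℝ)) (v : Fin d → ℂ)
  {lam : ℂ} {s : ℝ}

lemma SigmaV_of_re_eq (hre : lam.re = s / 2) (him : lam.im ≠ 0) :
    SigmaV c utld μ v lam s = (1 / 2 : ℝ) • (∑ ℓ, utld ℓ * Cvl c μ v ℓ) • 1 := by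
  simp only [SigmaV, if_pos hre, if_neg him, add_zero, smul_smul, ← Finset.sum_smul]

lemma SigmaV_of_re_ne (hre : lam.re ≠ s / 2) :
    SigmaV c utld μ v lam s = (1 / 2 : ℝ) •
      ((∑ ℓ, utld ℓ * (Cvl c μ v ℓ / (s - 2 * lam.re))) • 1 +
        conjMulMatrix (∑ ℓ, utld ℓ • (Ctvl c μ v ℓ / (s - 2 * lam)))) := by
  rw [SigmaV, if_neg hre, ← sum_smul_smul_one_add_conjMulMatrix]
  rfl

variable {c utld μ v} in
lemma SigmaV_posDef (hc : ∀ ℓ, 0 ≤ c ℓ) (hu : ∀ ℓ, 0 < utld ℓ) (hlam : lam.re ≤ s / 2)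
    (him : lam.im ≠ 0) (hpos : ∃ ℓ, 0 < Cvl c μ v ℓ) : (SigmaV c utld μ v lam s).PosDef := by
  obtain ⟨ℓ₀, hℓ₀⟩ := hpos
  rcases hlam.eq_or_lt with hre | hre
  · have hK : 0 < ∑ ℓ, utld ℓ * Cvl c μ v ℓ :=
      Finset.sum_pos' (fun ℓ _ => mul_nonneg (hu ℓ).le (Cvl_nonneg (hc ℓ) v))
        ⟨ℓ₀, Finset.mem_univ _, mul_pos (hu ℓ₀) hℓ₀⟩
    rw [SigmaV_of_re_eq c utld μ v hre him]
    exact (Matrix.PosDef.one.smul hK).smul one_half_pos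
  rw [SigmaV_of_re_ne c utld μ v hre.ne]
  refine (posDef_smul_one_add_conjMulMatrix ?_).smul one_half_pos
  set w : ℂ := s - 2 * lam
  have ha : 0 < s - 2 * lam.re := by linarith
  have haw : s - 2 * lam.re < ‖w‖ := by
    have : w.im ≠ 0 := by simp [w, him]
    simpa [w] using (le_abs_self _).trans_lt (Complex.abs_re_lt_norm.2 this)
  calc ‖∑ ℓ, utld ℓ • (Ctvl c μ v ℓ / w)‖ ≤ ∑ ℓ, utld ℓ * (Cvl c μ v ℓ / ‖w‖) := by
        refine (norm_sum_le _ _).trans (Finset.sum_le_sum fun ℓ _ => ?_)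
        rw [norm_smul, norm_div, Real.norm_of_nonneg (hu ℓ).le]
        exact mul_le_mul_of_nonneg_left
          (div_le_div_of_nonneg_right (norm_Ctvl_le (hc ℓ) v) (norm_nonneg w)) (hu ℓ).le
    _ < ∑ ℓ, utld ℓ * (Cvl c μ v ℓ / (s - 2 * lam.re)) := by
        refine Finset.sum_lt_sum (fun ℓ _ => ?_) ⟨ℓ₀, Finset.mem_univ _, ?_⟩
        · exact mul_le_mul_of_nonneg_left
            (div_le_div_of_nonneg_left (Cvl_nonneg (hc ℓ) v) ha haw.le) (hu ℓ).le
        · exact mul_lt_mul_of_pos_left (div_lt_div_of_pos_left hℓ₀ ha haw) (hu ℓ₀)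

lemma SigmaV_eq_zero (hc : ∀ ℓ, 0 ≤ c ℓ) (him : lam.im ≠ 0) (hC : ∀ ℓ, Cvl c μ v ℓ = 0) :
    SigmaV c utld μ v lam s = 0 := by
  have hCt : ∀ ℓ, Ctvl c μ v ℓ = 0 := fun ℓ =>
    norm_le_zero_iff.1 ((norm_Ctvl_le (hc ℓ) v).trans_eq (hC ℓ))
  by_cases hre : lam.re = s / 2
  · simp [SigmaV_of_re_eq c utld μ v hre him, hC]
  · simp [SigmaV_of_re_ne c utld μ v hre, hC, hCt]

end CovarianceMatrix

theorem stmt7_general (d : ℕ) (c : Fin d → ℝ) (hc : ∀ i, 0 ≤ c i)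
    (utld : Fin d → ℝ) (hu : ∀ i, 0 < utld i)
    (μ : Fin d → Measure (Fin d → ℝ))
    (hsupp : ∀ ℓ, μ ℓ {z | ¬ ((∀ i, 0 ≤ z i) ∧ z ≠ 0)} = 0)
    (hmom : ∀ ℓ, ∫⁻ z, (‖z‖₊ : ℝ≥0∞) ^ 2 ∂(μ ℓ) < ⊤)
    (v : Fin d → ℂ) (lam : ℂ) (s : ℝ) (hlam : lam.re ≤ s / 2)
    (him : lam.im ≠ 0) :
    (IsUnit (SigmaV c utld μ v lam s) ↔
      ∃ ℓ, (c ℓ : ℂ) * v ℓ ≠ 0 ∨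
        0 < μ ℓ {z | ((∀ i, 0 ≤ z i) ∧ z ≠ 0) ∧ pairCV v z ≠ 0}) ∧
    ((∃ ℓ, (c ℓ : ℂ) * v ℓ ≠ 0 ∨
        0 < μ ℓ {z | ((∀ i, 0 ≤ z i) ∧ z ≠ 0) ∧ pairCV v z ≠ 0}) →
      (SigmaV c utld μ v lam s).PosDef) := by
  simp only [← Cvl_pos_iff (hc _) (hsupp _) (hmom _)]
  by_cases hpos : ∃ ℓ, 0 < Cvl c μ v ℓ
  · have hpd := SigmaV_posDef hc hu hlam him hpos
    exact ⟨iff_of_true hpd.isUnit hpos, fun _ => hpd⟩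
  · have hC : ∀ ℓ, Cvl c μ v ℓ = 0 := fun ℓ =>
      (not_lt.1 fun h => hpos ⟨ℓ, h⟩).antisymm (Cvl_nonneg (hc ℓ) v)
    rw [SigmaV_eq_zero c utld μ v hc him hC]
    exact ⟨iff_of_false not_isUnit_zero hpos, hpos.elim⟩

/-- Let `c ∈ [0,∞)^d`, `ũ ∈ (0,∞)^d`, let `μ_1, …, μ_d` be Borel measures on
`U_d = [0,∞)^d \ {0}` with finite second moments, `v ∈ ℂ^d`, and `λ ∈ ℂ`, `s > 0` with
`Re λ ≤ s/2` and `Im λ ≠ 0`. Then `Σ_v` is invertible if and only if there exists `ℓ` such that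
`c_ℓ ⟨v,e_ℓ⟩ ≠ 0` or `μ_ℓ {z ∈ U_d : ⟨v,z⟩ ≠ 0} > 0`; moreover, in that case `Σ_v` is strictly
positive definite. -/
theorem stmt7 (d : ℕ) (c : Fin d → ℝ) (hc : ∀ i, 0 ≤ c i)
    (utld : Fin d → ℝ) (hu : ∀ i, 0 < utld i)
    (μ : Fin d → Measure (Fin d → ℝ))
    (hsupp : ∀ ℓ, μ ℓ {z | ¬ ((∀ i, 0 ≤ z i) ∧ z ≠ 0)} = 0)
    (hmom : ∀ ℓ, ∫⁻ z, (‖z‖₊ : ℝ≥0∞) ^ 2 ∂(μ ℓ) < ⊤)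
    (v : Fin d → ℂ) (lam : ℂ) (s : ℝ) (hs : 0 < s) (hlam : lam.re ≤ s / 2)
    (him : lam.im ≠ 0) :
    (IsUnit (SigmaV c utld μ v lam s) ↔
      ∃ ℓ, (c ℓ : ℂ) * v ℓ ≠ 0 ∨
        0 < μ ℓ {z | ((∀ i, 0 ≤ z i) ∧ z ≠ 0) ∧ pairCV v z ≠ 0}) ∧
    ((∃ ℓ, (c ℓ : ℂ) * v ℓ ≠ 0 ∨
        0 < μ ℓ {z | ((∀ i, 0 ≤ z i) ∧ z ≠ 0) ∧ pairCV v z ≠ 0}) →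
      (SigmaV c utld μ v lam s).PosDef) :=
  stmt7_general d c hc utld hu μ hsupp hmom v lam s hlam him
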